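/- arXiv:1303.1691 — 4 statements merged into one kernel-verified Lean document; each statement's English description precedes it below -/
import Mathlib

section
/- When two players in a weighted voting game merge into a single player whose weight is the sum of their weights, the probabilistic Banzhaf index of the merged player in the new game equals the sum of the probabilistic Banzhaf indices of the two original players in the original game. -/
open Finset

/-- The value (1 or 0) of coalition `C` in the weighted voting game with
weights `w` and quota `q`: `C` wins iff its total weight is at least `q`. -/
def wvgVal {ι : Type*} [DecidableEq ι] (w : ι → ℕ) (q : ℕ) (C : Finset ι) : ℚ :=
  if q ≤ ∑ j ∈ C, w j then 1 else 0

/-- Probabilistic Banzhaf index of player `i` in the weighted voting game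
with weights `w` and quota `q`. -/
def banzhaf {ι : Type*} [Fintype ι] [DecidableEq ι] (w : ι → ℕ) (q : ℕ) (i : ι) : ℚ :=
  (1 / 2 ^ (Fintype.card ι - 1)) *
    ∑ C ∈ (Finset.univ.erase i).powerset, (wvgVal w q (insert i C) - wvgVal w q C)

/-!
For every coalition `D` of the players other than `i` and `j`, the swings of `i` at `D` and
`D ∪ {j}` together with those of `j` at `D` and `D ∪ {i}` telescope to twice
`v (D ∪ {i, j}) - v D`, which is the swing of the merged player at `D`. The merged game has one
player fewer, so its normalising factor `1 / 2 ^ (n - 2)` is exactly twice `1 / 2 ^ (n - 1)`.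
-/

theorem Finset.powerset_map {α β : Type*} (f : α ↪ β) (s : Finset α) :
    (s.map f).powerset = s.powerset.map (mapEmbedding f).toEmbedding := by
  ext t
  simp [subset_map_iff, eq_comm]

theorem Finset.sum_powerset_map {α β M : Type*} [AddCommMonoid M] (f : α ↪ β) (s : Finset α)
    (g : Finset β → M) :
    ∑ t ∈ (s.map f).powerset, g t = ∑ u ∈ s.powerset, g (u.map f) := by
  rw [powerset_map, sum_map]
  rfl

theorem sum_marginal_add_sum_marginal {ι M : Type*} [DecidableEq ι] [AddCommGroup M]
    (v : Finset ι → M) {s : Finset ι} {i j : ι} (hi : i ∉ s) (hj : j ∉ s) :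
    ∑ C ∈ (insert j s).powerset, (v (insert i C) - v C) +
        ∑ C ∈ (insert i s).powerset, (v (insert j C) - v C) =
      2 • ∑ D ∈ s.powerset, (v (insert i (insert j D)) - v D) := by
  rw [sum_powerset_insert hj, sum_powerset_insert hi, two_nsmul]
  simp only [← sum_add_distrib]
  refine sum_congr rfl fun D _ => ?_
  rw [insert_comm j i]
  abel

section Merge

variable {ι : Type*} [DecidableEq ι]

def mergeWeights (w : ι → ℕ) (i j : ι) : Option {k : ι // k ≠ i ∧ k ≠ j} → ℕ :=
  fun o => Option.elim o (w i + w j) (fun k => w k.1)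

variable (w : ι → ℕ) (q : ℕ) {i j : ι}

theorem wvgVal_mergeWeights_map_some (D : Finset {k : ι // k ≠ i ∧ k ≠ j}) :
    wvgVal (mergeWeights w i j) q (D.map .some) = wvgVal w q (D.map (.subtype _)) := by
  simp only [wvgVal, sum_map]
  rfl

theorem wvgVal_mergeWeights_insert_none (hij : i ≠ j)
    (D : Finset {k : ι // k ≠ i ∧ k ≠ j}) :
    wvgVal (mergeWeights w i j) q (insert none (D.map .some)) =
      wvgVal w q (insert i (insert j (D.map (.subtype _)))) := by
  have hi : i ∉ insert j (D.map (.subtype _)) := by simp [hij]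
  have hj : j ∉ D.map (.subtype _) := by simp
  rw [wvgVal, wvgVal, sum_insert (by simp), sum_insert hi, sum_insert hj, sum_map, sum_map,
    ← add_assoc]
  rfl

variable [Fintype ι]

theorem banzhaf_mergeWeights_none (hij : i ≠ j) :
    banzhaf (mergeWeights w i j) q none =
      1 / 2 ^ Fintype.card {k : ι // k ≠ i ∧ k ≠ j} *
        ∑ D ∈ (univ : Finset {k : ι // k ≠ i ∧ k ≠ j}).powerset,
          (wvgVal w q (insert i (insert j (D.map (.subtype _)))) -
            wvgVal w q (D.map (.subtype _))) := by
  have hnone :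
      (univ : Finset (Option {k : ι // k ≠ i ∧ k ≠ j})).erase none = univ.map .some := by
    ext (_ | _) <;> simp
  rw [banzhaf, Fintype.card_option, Nat.add_sub_cancel, hnone, sum_powerset_map]
  simp only [wvgVal_mergeWeights_map_some, wvgVal_mergeWeights_insert_none w q hij]

theorem banzhaf_add_banzhaf (hij : i ≠ j) :
    banzhaf w q i + banzhaf w q j =
      1 / 2 ^ #{k | k ≠ i ∧ k ≠ j} *
        ∑ D ∈ ({k | k ≠ i ∧ k ≠ j} : Finset ι).powerset,
          (wvgVal w q (insert i (insert j D)) - wvgVal w q D) := by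
  set S : Finset ι := {k | k ≠ i ∧ k ≠ j}
  have hiS : i ∉ S := by simp [S]
  have hjS : j ∉ S := by simp [S]
  have hi : univ.erase i = insert j S := by ext k; simp [S]; grind
  have hj : univ.erase j = insert i S := by ext k; simp [S]; grind
  have hcard : Fintype.card ι - 1 = #S + 1 := by
    rw [← card_univ, ← card_erase_of_mem (mem_univ i), hi, card_insert_of_notMem hjS]
  rw [banzhaf, banzhaf, hcard, hi, hj, ← mul_add, sum_marginal_add_sum_marginal _ hiS hjS,
    pow_succ, two_nsmul]
  field_simp
  ring

end Merge

theorem banzhaf_merge_two_general (n : ℕ) (w : Fin n → ℕ) (q : ℕ)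
    (i j : Fin n) (hij : i ≠ j) :
    banzhaf
        (fun o : Option {k : Fin n // k ≠ i ∧ k ≠ j} =>
          Option.elim o (w i + w j) (fun k => w k.1)) q
        (none : Option {k : Fin n // k ≠ i ∧ k ≠ j}) =
      banzhaf w q i + banzhaf w q j := by
  change banzhaf (mergeWeights w i j) q none = _
  rw [banzhaf_mergeWeights_none w q hij, banzhaf_add_banzhaf w q hij,
    Fintype.card_subtype, ← univ_map_subtype, sum_powerset_map]

theorem banzhaf_merge_two (n : ℕ) (w : Fin n → ℕ) (q : ℕ)
    (hq : 0 < q) (hq' : q ≤ ∑ j, w j) (i j : Fin n) (hij : i ≠ j) :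
    banzhaf
        (fun o : Option {k : Fin n // k ≠ i ∧ k ≠ j} =>
          Option.elim o (w i + w j) (fun k => w k.1)) q
        (none : Option {k : Fin n // k ≠ i ∧ k ≠ j}) =
      banzhaf w q i + banzhaf w q j :=
  banzhaf_merge_two_general n w q i j hij
end

section
/- Let A = (a_1,...,a_m) and B = (b_1,...,b_n) be sequences of positive integers, let α = Σ a_i, let q_A ≤ α−1 and q_B be positive integers, and form the combined sequence C = (a_1,...,a_m, 2α·b_1,...,2α·b_n). Then the number of subsets of indices of C whose elements sum to q_A equals the number of subsets of {1,...,m} with Σ_{i∈S} a_i = q_A, and the number of subsets of indices of C whose elements sum to 2α·q_B equals the number of subsets of {1,...,n} with Σ_{i∈S} b_i = q_B. -/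
open Finset

/-- The number of subsets of indices of the sequence `c : Fin n → ℕ` whose
corresponding elements sum to `t` (the `#SubsetSum` count). -/
def countSubsetSum (n : ℕ) (c : Fin n → ℕ) (t : ℕ) : ℕ :=
  ((Finset.univ : Finset (Fin n)).powerset.filter (fun S => ∑ i ∈ S, c i = t)).card

/-!
Every entry `2α·b_i` exceeds `α`, the total of `A`, so the sum of a subset of `C` splits as
`x + 2α·y` with `x ≤ α` the part coming from `A` and `y` a subset sum of `B`. If the target is
`q_A < α`, then `y = 0`, so the subset avoids `B`; if the target is `2α·q_B`, then `2α ∣ x < 2α`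
forces `x = 0`, so the subset avoids `A`. Either way the subsets of `C` hitting the target are
exactly the images of the subsets of `A` (resp. `B`) hitting it.
-/

theorem Fin.sum_append_eq {M : Type*} [AddCommMonoid M] {m n : ℕ} (u : Fin m → M)
    (v : Fin n → M) (T : Finset (Fin (m + n))) :
    ∑ j ∈ T, Fin.append u v j =
      ∑ i ∈ T.preimage (Fin.castAdd n) (Fin.castAdd_injective m n).injOn, u i +
        ∑ i ∈ T.preimage (Fin.natAdd m) (Fin.natAdd_injective n m).injOn, v i := by
  rw [← Fintype.sum_ite_mem T, Fin.sum_univ_add, ← Fintype.sum_ite_mem (T.preimage _ _),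
    ← Fintype.sum_ite_mem (T.preimage (Fin.natAdd m) _)]
  simp only [Fin.append_left, Fin.append_right, Finset.mem_preimage]

theorem Fin.subset_map_castAddEmb_of_preimage_natAdd_eq_empty {m n : ℕ}
    {T : Finset (Fin (m + n))}
    (h : T.preimage (Fin.natAdd m) (Fin.natAdd_injective n m).injOn = ∅) :
    T ⊆ univ.map (Fin.castAddEmb n) := by
  intro j hj
  induction j using Fin.addCases with
  | left i => exact mem_map_of_mem _ (mem_univ i)
  | right i => exact absurd (mem_preimage.2 hj) (h ▸ notMem_empty i)

theorem Fin.subset_map_natAddEmb_of_preimage_castAdd_eq_empty {m n : ℕ}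
    {T : Finset (Fin (m + n))}
    (h : T.preimage (Fin.castAdd n) (Fin.castAdd_injective m n).injOn = ∅) :
    T ⊆ univ.map (Fin.natAddEmb m) := by
  intro j hj
  induction j using Fin.addCases with
  | left i => exact absurd (mem_preimage.2 hj) (h ▸ notMem_empty i)
  | right i => exact mem_map_of_mem _ (mem_univ i)

theorem Finset.eq_empty_of_sum_eq_zero_of_pos {ι : Type*} {s : Finset ι} {f : ι → ℕ}
    (hf : ∀ i, 0 < f i) (h : ∑ i ∈ s, f i = 0) : s = ∅ :=
  eq_empty_of_forall_notMem fun i hi => (hf i).ne' (sum_eq_zero_iff.1 h i hi)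

theorem countSubsetSum_eq_card (n : ℕ) (c : Fin n → ℕ) (t : ℕ) :
    countSubsetSum n c t = #{S : Finset (Fin n) | ∑ i ∈ S, c i = t} := by
  rw [countSubsetSum, powerset_univ]

theorem countSubsetSum_mul_left {n k : ℕ} (hk : 0 < k) (c : Fin n → ℕ) (t : ℕ) :
    countSubsetSum n (fun i => k * c i) (k * t) = countSubsetSum n c t := by
  simp only [countSubsetSum_eq_card, ← mul_sum, Nat.mul_left_cancel_iff hk]

theorem countSubsetSum_eq_of_subset_map {j k : ℕ} (e : Fin j ↪ Fin k) (c : Fin k → ℕ)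
    (d : Fin j → ℕ) (hcd : ∀ i, c (e i) = d i) (t : ℕ)
    (h : ∀ T : Finset (Fin k), ∑ i ∈ T, c i = t → T ⊆ univ.map e) :
    countSubsetSum k c t = countSubsetSum j d t := by
  rw [countSubsetSum_eq_card, countSubsetSum_eq_card, ← card_map (mapEmbedding e).toEmbedding]
  congr 1
  ext T
  simp only [mem_filter, mem_univ, true_and, mem_map, RelEmbedding.coe_toEmbedding,
    mapEmbedding_apply]
  constructor
  · intro hT
    obtain ⟨S, -, rfl⟩ := subset_map_iff.1 (h T hT)
    refine ⟨S, ?_, rfl⟩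
    rwa [sum_map, sum_congr rfl fun i _ => hcd i] at hT
  · rintro ⟨S, hS, rfl⟩
    rwa [sum_map, sum_congr rfl fun i _ => hcd i]

theorem compare_subsetsum_R_reduction_general (m n : ℕ) (a : Fin m → ℕ) (b : Fin n → ℕ)
    (ha : ∀ i, 0 < a i) (hb : ∀ i, 0 < b i) (α : ℕ) (hα : α = ∑ i, a i)
    (qA qB : ℕ) (hqA : 0 < qA) (hqA' : qA ≤ α - 1) :
    countSubsetSum (m + n) (Fin.append a (fun i => 2 * α * b i)) qA =
        countSubsetSum m a qA ∧
      countSubsetSum (m + n) (Fin.append a (fun i => 2 * α * b i)) (2 * α * qB) =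
        countSubsetSum n b qB := by
  have hsum : ∀ T : Finset (Fin (m + n)), ∑ j ∈ T, Fin.append a (fun i => 2 * α * b i) j =
      ∑ i ∈ T.preimage (Fin.castAdd n) (Fin.castAdd_injective m n).injOn, a i +
        2 * α * ∑ i ∈ T.preimage (Fin.natAdd m) (Fin.natAdd_injective n m).injOn, b i := by
    intro T
    rw [Fin.sum_append_eq, mul_sum]
  have hleft : ∀ T : Finset (Fin (m + n)),
      ∑ i ∈ T.preimage (Fin.castAdd n) (Fin.castAdd_injective m n).injOn, a i ≤ α :=
    fun T => hα ▸ sum_le_sum_of_subset (subset_univ _)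
  constructor
  · refine countSubsetSum_eq_of_subset_map (Fin.castAddEmb n) _ a (Fin.append_left _ _) _
      fun T hT => Fin.subset_map_castAddEmb_of_preimage_natAdd_eq_empty
        (eq_empty_of_sum_eq_zero_of_pos hb ?_)
    rw [hsum] at hT
    exact Nat.lt_one_iff.1 (Nat.lt_of_mul_lt_mul_left (a := 2 * α) (by omega))
  · refine (countSubsetSum_eq_of_subset_map (Fin.natAddEmb m) _ (fun i => 2 * α * b i)
      (Fin.append_right _ _) _ fun T hT => Fin.subset_map_natAddEmb_of_preimage_castAdd_eq_empty
        (eq_empty_of_sum_eq_zero_of_pos ha ?_)).trans (countSubsetSum_mul_left (by omega) b qB)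
    rw [hsum] at hT
    have hdvd :
        2 * α ∣ ∑ i ∈ T.preimage (Fin.castAdd n) (Fin.castAdd_injective m n).injOn, a i :=
      (Nat.dvd_add_left (dvd_mul_right _ _)).1 (hT ▸ dvd_mul_right _ _)
    exact Nat.eq_zero_of_dvd_of_lt hdvd (by have := hleft T; omega)

theorem compare_subsetsum_R_reduction (m n : ℕ) (a : Fin m → ℕ) (b : Fin n → ℕ)
    (ha : ∀ i, 0 < a i) (hb : ∀ i, 0 < b i) (α : ℕ) (hα : α = ∑ i, a i)
    (qA qB : ℕ) (hqA : 0 < qA) (hqA' : qA ≤ α - 1) (hqB : 0 < qB) :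
    countSubsetSum (m + n) (Fin.append a (fun i => 2 * α * b i)) qA =
        countSubsetSum m a qA ∧
      countSubsetSum (m + n) (Fin.append a (fun i => 2 * α * b i)) (2 * α * qB) =
        countSubsetSum n b qB :=
  compare_subsetsum_R_reduction_general m n a b ha hb α hα qA qB hqA hqA'
end

section
/- Let A = (a_1,...,a_n) be positive integers with each a_i ≡ 0 (mod 8), let q_1, q_2 be positive integers with q_1, q_2 ≡ 0 (mod 8) and 1 ≤ q_1, q_2 ≤ α−1 where α = Σ a_i. Define B = (a_1,...,a_n, 2α−q_1, 2α+1−q_2, 2α+3+q_1+q_2, 3α) and T = 10α+4. Then the number of subsets of indices of B summing to T/2 − 2 = 5α equals the number of subsets of {1,...,n} with Σ a_i = q_1, and the number of subsets of indices of B summing to T/2 − 1 = 5α+1 equals the number of subsets of {1,...,n} with Σ a_i = q_2. -/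
/-!
A subset of the indices of `B` splits into a subset `S` of the indices of `A` and a subset `V`
of the four new indices. The sum over `S` is a multiple of `8` in `[0, α]`, while the new
elements are `≡ 0, 1, 3, 0 (mod 8)` and of size about `2α, 2α, 2α, 3α`. Hence the only `V` whose
sum has the residue of the target and lies within `α` below it is `{2α - q₁, 3α}` for `5α`
and `{2α + 1 - q₂, 3α}` for `5α + 1`; what `S` must contribute is then `q₁`, resp. `q₂`.
-/

open Finset

theorem countSubsetSum_append {n m : ℕ} (a : Fin n → ℕ) (b : Fin m → ℕ) (t : ℕ) :
    countSubsetSum (n + m) (Fin.append a b) t =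
      ∑ V : Finset (Fin m), #{S : Finset (Fin n) | ∑ i ∈ S, a i + ∑ j ∈ V, b j = t} := by
  simp only [countSubsetSum, powerset_univ, card_filter]
  rw [← Fintype.sum_prod_type_right']
  refine (Fintype.sum_equiv (sumEquiv.toEquiv.symm.trans finSumFinEquiv.finsetCongr) _ _
    fun p => ?_).symm
  simp [Equiv.finsetCongr_apply, sum_disjSum]

theorem countSubsetSum_append_of_unique {n m : ℕ} (a : Fin n → ℕ) (b : Fin m → ℕ)
    {t t₀ : ℕ} (V₀ : Finset (Fin m)) (hV₀ : t₀ + ∑ j ∈ V₀, b j = t)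
    (h : ∀ (V : Finset (Fin m)) (S : Finset (Fin n)),
      ∑ i ∈ S, a i + ∑ j ∈ V, b j = t → V = V₀) :
    countSubsetSum (n + m) (Fin.append a b) t = countSubsetSum n a t₀ := by
  rw [countSubsetSum_append, sum_eq_single_of_mem V₀ (mem_univ _)
    fun V _ hV => card_eq_zero.2 <| filter_eq_empty_iff.2 fun S _ hS => hV (h V S hS),
    countSubsetSum, powerset_univ]
  subst hV₀
  simp only [add_left_inj]

theorem gadget_subset_unique {α q1 q2 s : ℕ} (hα : 8 ∣ α) (hq1d : 8 ∣ q1) (hq2d : 8 ∣ q2)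
    (hq1 : q1 < α) (hq2 : 0 < q2) (hq2' : q2 < α) (hs : 8 ∣ s) (hsα : s ≤ α)
    (V : Finset (Fin 4)) :
    (s + ∑ j ∈ V, ![2 * α - q1, 2 * α + 1 - q2, 2 * α + 3 + q1 + q2, 3 * α] j = 5 * α →
      V = {0, 3}) ∧
    (s + ∑ j ∈ V, ![2 * α - q1, 2 * α + 1 - q2, 2 * α + 3 + q1 + q2, 3 * α] j = 5 * α + 1 →
      V = {1, 3}) := by
  fin_cases V <;> simp <;> refine ⟨fun h => ?_, fun h => ?_⟩ <;> first | decide | omega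

theorem compare_subsetsum_RR_reduction_general (n : ℕ) (a : Fin n → ℕ)
    (h8 : ∀ i, 8 ∣ a i) (α : ℕ) (hα : α = ∑ i, a i)
    (q1 q2 : ℕ) (hq1d : 8 ∣ q1) (hq2d : 8 ∣ q2)
    (hq1' : q1 ≤ α - 1) (hq2 : 1 ≤ q2) (hq2' : q2 ≤ α - 1) :
    countSubsetSum (n + 4)
        (Fin.append a ![2 * α - q1, 2 * α + 1 - q2, 2 * α + 3 + q1 + q2, 3 * α])
        (5 * α) = countSubsetSum n a q1 ∧
      countSubsetSum (n + 4)
        (Fin.append a ![2 * α - q1, 2 * α + 1 - q2, 2 * α + 3 + q1 + q2, 3 * α])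
        (5 * α + 1) = countSubsetSum n a q2 := by
  have hα8 : 8 ∣ α := hα ▸ dvd_sum fun i _ => h8 i
  have hsum (S : Finset (Fin n)) : 8 ∣ ∑ i ∈ S, a i ∧ ∑ i ∈ S, a i ≤ α :=
    ⟨dvd_sum fun i _ => h8 i, hα ▸ sum_le_sum_of_subset (subset_univ S)⟩
  have hgadget (V : Finset (Fin 4)) (S : Finset (Fin n)) :=
    gadget_subset_unique hα8 hq1d hq2d (by omega) (by omega) (by omega) (hsum S).1 (hsum S).2 V
  constructor
  · exact countSubsetSum_append_of_unique a _ {0, 3} (by simp; omega)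
      fun V S hS => (hgadget V S).1 hS
  · exact countSubsetSum_append_of_unique a _ {1, 3} (by simp; omega)
      fun V S hS => (hgadget V S).2 hS

theorem compare_subsetsum_RR_reduction (n : ℕ) (a : Fin n → ℕ)
    (ha : ∀ i, 0 < a i) (h8 : ∀ i, 8 ∣ a i) (α : ℕ) (hα : α = ∑ i, a i)
    (q1 q2 : ℕ) (hq1d : 8 ∣ q1) (hq2d : 8 ∣ q2)
    (hq1 : 1 ≤ q1) (hq1' : q1 ≤ α - 1) (hq2 : 1 ≤ q2) (hq2' : q2 ≤ α - 1) :
    countSubsetSum (n + 4)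
        (Fin.append a ![2 * α - q1, 2 * α + 1 - q2, 2 * α + 3 + q1 + q2, 3 * α])
        (5 * α) = countSubsetSum n a q1 ∧
      countSubsetSum (n + 4)
        (Fin.append a ![2 * α - q1, 2 * α + 1 - q2, 2 * α + 3 + q1 + q2, 3 * α])
        (5 * α + 1) = countSubsetSum n a q2 :=
  compare_subsetsum_RR_reduction_general n a h8 α hα q1 q2 hq1d hq2d hq1' hq2 hq2'
end

section
/- In any weighted voting game, splitting a player i of weight w_i into two players of weights w' and w_i − w' (keeping all other weights and the quota fixed) yields a game in which the sum of the probabilistic Banzhaf indices of the two new players equals the probabilistic Banzhaf index of the original player i in the original game. -/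
open Finset

/-
Fix a coalition `C` of the players other than `i`, and call the two halves of `i` `a` and `b`.
In the split game `a` is swing-tested against `C` and `C ∪ {b}`, and `b` against `C` and
`C ∪ {a}`; these four marginal contributions telescope to `2 (v (C ∪ {a, b}) - v C)`.
Since `w' + (w i - w') = w i`, the coalition `C ∪ {a, b}` wins exactly when `C ∪ {i}` wins in
the original game, and the factor 2 is absorbed by the normalisation, the split game having
one more player.
-/

namespace Finset

theorem sum_powerset_map_s16 {α β M : Type*} [DecidableEq β] [AddCommMonoid M]
    (f : α ↪ β) (s : Finset α) (g : Finset β → M) :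
    ∑ t ∈ (s.map f).powerset, g t = ∑ t ∈ s.powerset, g (t.map f) := by
  classical
  simp only [map_eq_image, powerset_image]
  exact sum_image fun _ _ _ _ h => image_injective f.injective h

theorem sum_powerset_marginal_add_marginal {α M : Type*} [DecidableEq α] [AddCommGroup M]
    {a b : α} {s : Finset α} (ha : a ∉ s) (hb : b ∉ s) (f : Finset α → M) :
    ∑ C ∈ (insert b s).powerset, (f (insert a C) - f C) +
        ∑ C ∈ (insert a s).powerset, (f (insert b C) - f C) =
      2 • ∑ C ∈ s.powerset, (f (insert a (insert b C)) - f C) := by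
  rw [sum_powerset_insert hb, sum_powerset_insert ha, two_nsmul]
  simp only [← sum_add_distrib]
  refine sum_congr rfl fun C _ => ?_
  rw [insert_comm b a]
  abel

end Finset

section Split

variable {ι : Type*} [DecidableEq ι]

def splitWeights (w : ι → ℕ) (i : ι) (w' : ℕ) : ι ⊕ Unit → ℕ :=
  Sum.elim (Function.update w i w') (fun _ => w i - w')

theorem sum_splitWeights_map_inl (w : ι → ℕ) {i : ι} (w' : ℕ) {C : Finset ι} (hi : i ∉ C) :
    ∑ j ∈ C.map .inl, splitWeights w i w' j = ∑ j ∈ C, w j := by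
  rw [sum_map]
  refine sum_congr rfl fun j hj => ?_
  simp [splitWeights, Function.update_of_ne (ne_of_mem_of_not_mem hj hi)]

theorem wvgVal_splitWeights_map_inl (w : ι → ℕ) {i : ι} (w' q : ℕ) {C : Finset ι}
    (hi : i ∉ C) : wvgVal (splitWeights w i w') q (C.map .inl) = wvgVal w q C := by
  rw [wvgVal, wvgVal, sum_splitWeights_map_inl w w' hi]

theorem wvgVal_splitWeights_insert_inl_insert_inr (w : ι → ℕ) {i : ι} {w' : ℕ}
    (hw' : w' ≤ w i) (q : ℕ) {C : Finset ι} (hi : i ∉ C) :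
    wvgVal (splitWeights w i w') q (insert (.inl i) (insert (.inr ()) (C.map .inl))) =
      wvgVal w q (insert i C) := by
  have hinl : (.inl i : ι ⊕ Unit) ∉ insert (.inr ()) (C.map .inl) := by simp [hi]
  have hinr : (.inr () : ι ⊕ Unit) ∉ C.map .inl := by simp
  rw [wvgVal, wvgVal, sum_insert hinl, sum_insert hinr, sum_insert hi,
    sum_splitWeights_map_inl w w' hi]
  simp only [splitWeights, Sum.elim_inl, Sum.elim_inr, Function.update_self]
  rw [← add_assoc, Nat.add_sub_cancel' hw']

theorem univ_erase_inl [Fintype ι] (i : ι) :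
    (univ : Finset (ι ⊕ Unit)).erase (.inl i) = insert (.inr ()) ((univ.erase i).map .inl) := by
  ext (j | _) <;> simp

theorem univ_erase_inr [Fintype ι] (i : ι) :
    (univ : Finset (ι ⊕ Unit)).erase (.inr ()) = insert (.inl i) ((univ.erase i).map .inl) := by
  ext (j | _)
  · by_cases j = i <;> simp_all
  · simp

end Split

theorem banzhaf_split_two_sum_general (n : ℕ) (w : Fin n → ℕ) (q : ℕ)
    (i : Fin n) (w' : ℕ) (hw' : w' ≤ w i) :
    banzhaf (Sum.elim (Function.update w i w') (fun _ : Unit => w i - w') :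
          Fin n ⊕ Unit → ℕ) q (Sum.inl i) +
        banzhaf (Sum.elim (Function.update w i w') (fun _ : Unit => w i - w') :
          Fin n ⊕ Unit → ℕ) q (Sum.inr ()) =
      banzhaf w q i := by
  have hinl : (.inl i : Fin n ⊕ Unit) ∉ (univ.erase i).map .inl := by simp
  have hinr : (.inr () : Fin n ⊕ Unit) ∉ (univ.erase i).map .inl := by simp
  change banzhaf (splitWeights w i w') q _ + banzhaf (splitWeights w i w') q _ = _
  simp only [banzhaf]
  rw [← mul_add, univ_erase_inl, univ_erase_inr,
    sum_powerset_marginal_add_marginal hinl hinr, sum_powerset_map_s16]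
  have hiC : ∀ C ∈ (univ.erase i).powerset, i ∉ C := fun _ hC =>
    notMem_of_mem_powerset_of_notMem hC (notMem_erase i univ)
  rw [sum_congr rfl fun C hC => by
    rw [wvgVal_splitWeights_insert_inl_insert_inr w hw' q (hiC C hC),
      wvgVal_splitWeights_map_inl w w' q (hiC C hC)]]
  have hn : n + 1 - 1 = n - 1 + 1 := by have := i.pos; omega
  simp only [Fintype.card_sum, Fintype.card_fin, Fintype.card_unit, nsmul_eq_mul, Nat.cast_ofNat]
  rw [hn, pow_succ]
  field_simp

theorem banzhaf_split_two_sum (n : ℕ) (w : Fin n → ℕ) (q : ℕ)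
    (hq : 0 < q) (hq' : q ≤ ∑ j, w j) (i : Fin n) (w' : ℕ) (hw' : w' ≤ w i) :
    banzhaf (Sum.elim (Function.update w i w') (fun _ : Unit => w i - w') :
          Fin n ⊕ Unit → ℕ) q (Sum.inl i) +
        banzhaf (Sum.elim (Function.update w i w') (fun _ : Unit => w i - w') :
          Fin n ⊕ Unit → ℕ) q (Sum.inr ()) =
      banzhaf w q i :=
  banzhaf_split_two_sum_general n w q i w' hw'
end
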